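/- arXiv:1902.03325 — 3 statements merged into one kernel-verified Lean document; each statement's English description precedes it below -/
import Mathlib

section
/- Let G be a discrete group, n ∈ ℕ, b ∈ M_{1,n}(C*_red(G)) with operator norm at most 1, and g ∈ G. Suppose there exist ε > 0 and a matrix π(g) ∈ Mₙ(ℂ) with ‖π(g)‖ ≤ 1 such that ‖u_g b − b π(g)‖₂ < ε. Then ‖g·b̃ − b̃‖_{ℓ²} < ε + √(2ε), where b̃(γ) = (Σᵢ |bᵢ(γ)|²)^{1/2} and g· denotes left translation on ℓ²(G). -/
open scoped ComplexOrder
def IsState {A : Type*} [CStarAlgebra A] (ρ : A →ₗ[ℂ] ℂ) : Prop :=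
  ρ 1 = 1 ∧ ∀ a : A, 0 ≤ (ρ (star a * a)).re ∧ (ρ (star a * a)).im = 0

def IsTracial {A : Type*} [CStarAlgebra A] (ρ : A →ₗ[ℂ] ℂ) : Prop :=
  ∀ a b : A, ρ (a * b) = ρ (b * a)

noncomputable def rowNorm2 {A : Type*} [CStarAlgebra A] (τ : A →ₗ[ℂ] ℂ) {n : ℕ}
    (b : Fin n → A) : ℝ :=
  Real.sqrt ((τ (∑ i, b i * star (b i))).re)

noncomputable def rowTilde {G A : Type*} [CStarAlgebra A] (F : A →ₗ[ℂ] (G → ℂ)) {n : ℕ}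
    (b : Fin n → A) : G → ℝ :=
  fun γ => Real.sqrt (∑ i, ‖F (b i) γ‖ ^ 2)

open scoped ENNReal

/-! ### Auxiliary lemmas -/

open Matrix in
open scoped Matrix.Norms.L2Operator in
lemma aux_matrix_bound {n : ℕ} (π : Matrix (Fin n) (Fin n) ℂ)
    (hπ : (1 - star π * π).PosSemidef) (w : Fin n → ℂ) :
    ∑ j, ‖∑ i, π i j * w i‖ ^ 2 ≤ ∑ i, ‖w i‖ ^ 2 := by
  have hdot : ∀ v : Fin n → ℂ, (star v ⬝ᵥ v).re = ∑ i, ‖v i‖ ^ 2 := by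
    intro v
    simp only [dotProduct, Pi.star_apply, Complex.re_sum]
    refine Finset.sum_congr rfl fun i _ => ?_
    rw [RCLike.star_def, RCLike.conj_mul]
    simp [← Complex.ofReal_pow]
  have key : ∀ x : Fin n → ℂ, ∑ j, ‖(π *ᵥ x) j‖ ^ 2 ≤ ∑ i, ‖x i‖ ^ 2 := by
    intro x
    have h := hπ.dotProduct_mulVec_nonneg x
    have hre : 0 ≤ (star x ⬝ᵥ ((1 - star π * π) *ᵥ x)).re := by
      rw [Complex.le_def] at h; exact h.1
    have hexp : star x ⬝ᵥ ((1 - star π * π) *ᵥ x)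
        = star x ⬝ᵥ x - star (π *ᵥ x) ⬝ᵥ (π *ᵥ x) := by
      rw [Matrix.sub_mulVec, dotProduct_sub, Matrix.one_mulVec,
        ← Matrix.mulVec_mulVec, Matrix.dotProduct_mulVec, Matrix.star_eq_conjTranspose,
        ← Matrix.star_mulVec]
    rw [hexp, Complex.sub_re, hdot, hdot, sub_nonneg] at hre
    exact hre
  have hnorm : ‖π‖ ≤ 1 := by
    rw [Matrix.l2_opNorm_def]
    refine ContinuousLinearMap.opNorm_le_bound _ zero_le_one fun x => ?_
    rw [one_mul]
    show ‖Matrix.toEuclideanLin π x‖ ≤ ‖x‖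
    rw [show ‖x‖ = ‖(WithLp.equiv 2 _).symm (WithLp.equiv 2 (Fin n → ℂ) x)‖ by simp]
    rw [Matrix.toEuclideanLin_apply, EuclideanSpace.norm_eq, EuclideanSpace.norm_eq]
    exact Real.sqrt_le_sqrt (key ((WithLp.equiv 2 (Fin n → ℂ)) x))
  have hnormH : ‖π.conjTranspose‖ ≤ 1 := by
    rw [Matrix.l2_opNorm_conjTranspose]; exact hnorm
  have h2 : ∀ v : Fin n → ℂ, ∑ j, ‖(π.conjTranspose *ᵥ v) j‖ ^ 2 ≤ ∑ i, ‖v i‖ ^ 2 := by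
    intro v
    have hle : ‖(EuclideanSpace.equiv (Fin n) ℂ).symm (π.conjTranspose *ᵥ v)‖
        ≤ ‖(EuclideanSpace.equiv (Fin n) ℂ).symm v‖ := by
      calc ‖(EuclideanSpace.equiv (Fin n) ℂ).symm (π.conjTranspose *ᵥ v)‖
          ≤ ‖π.conjTranspose‖ * ‖(EuclideanSpace.equiv (Fin n) ℂ).symm v‖ :=
            Matrix.l2_opNorm_mulVec π.conjTranspose ((EuclideanSpace.equiv (Fin n) ℂ).symm v)
        _ ≤ 1 * ‖(EuclideanSpace.equiv (Fin n) ℂ).symm v‖ :=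
            mul_le_mul_of_nonneg_right hnormH (norm_nonneg _)
        _ = _ := one_mul _
    rw [EuclideanSpace.norm_eq, EuclideanSpace.norm_eq] at hle
    exact (Real.sqrt_le_sqrt_iff (Finset.sum_nonneg fun i _ => sq_nonneg _)).mp
      (by simpa using hle)
  calc ∑ j, ‖∑ i, π i j * w i‖ ^ 2
      = ∑ j, ‖(π.conjTranspose *ᵥ star w) j‖ ^ 2 := by
        refine Finset.sum_congr rfl fun j _ => ?_
        have : (π.conjTranspose *ᵥ star w) j = star (∑ i, π i j * w i) := by
          simp [Matrix.mulVec, dotProduct, Matrix.conjTranspose_apply, star_sum,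
            mul_comm]
        rw [this, norm_star]
    _ ≤ ∑ i, ‖star w i‖ ^ 2 := h2 (star w)
    _ = ∑ i, ‖w i‖ ^ 2 := by simp

lemma aux_state_nonneg {A : Type*} [CStarAlgebra A] [PartialOrder A] [StarOrderedRing A]
    (τ : A →ₗ[ℂ] ℂ) (hτ : IsState τ) {x : A} (hx : 0 ≤ x) : 0 ≤ (τ x).re := by
  rw [StarOrderedRing.nonneg_iff] at hx
  refine AddSubmonoid.closure_induction ?_ ?_ ?_ hx
  · rintro y ⟨s, rfl⟩; exact (hτ.2 s).1
  · simp
  · intro y z _ _ hy hz; rw [map_add, Complex.add_re]; positivity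

lemma aux_tau_le_one {A : Type*} [CStarAlgebra A]
    (τ : A →ₗ[ℂ] ℂ) (hτ : IsState τ) {n : ℕ} (b : Fin n → A)
    (hb : ‖∑ i, b i * star (b i)‖ ≤ 1) : (τ (∑ i, b i * star (b i))).re ≤ 1 := by
  letI := CStarAlgebra.spectralOrder A
  haveI := CStarAlgebra.spectralOrderedRing A
  set x := ∑ i, b i * star (b i) with hxdef
  have hx0 : 0 ≤ x := Finset.sum_nonneg fun i _ => mul_star_self_nonneg (b i)
  have hx1 : x ≤ 1 := (CStarAlgebra.norm_le_one_iff_of_nonneg x hx0).mp hb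
  have h := aux_state_nonneg τ hτ (sub_nonneg.mpr hx1)
  rw [map_sub, Complex.sub_re, hτ.1, sub_nonneg] at h
  simpa using h

lemma aux_sq_rowTilde {G A : Type*} [CStarAlgebra A] (F : A →ₗ[ℂ] (G → ℂ)) {n : ℕ}
    (a : Fin n → A) (γ : G) : (rowTilde F a γ) ^ 2 = ∑ i, ‖F (a i) γ‖ ^ 2 :=
  Real.sq_sqrt (Finset.sum_nonneg fun i _ => sq_nonneg _)

lemma aux_rowTilde_nonneg {G A : Type*} [CStarAlgebra A] (F : A →ₗ[ℂ] (G → ℂ)) {n : ℕ}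
    (a : Fin n → A) (γ : G) : 0 ≤ rowTilde F a γ :=
  Real.sqrt_nonneg _

lemma aux_hasSum {G A : Type*} [CStarAlgebra A] (τ : A →ₗ[ℂ] ℂ)
    (F : A →ₗ[ℂ] (G → ℂ))
    (hP : ∀ a : A, HasSum (fun γ => ‖F a γ‖ ^ 2) ((τ (a * star a)).re)) {n : ℕ}
    (a : Fin n → A) :
    HasSum (fun γ => (rowTilde F a γ) ^ 2) ((τ (∑ j, a j * star (a j))).re) := by
  have h := hasSum_sum (s := (Finset.univ : Finset (Fin n)))
    (f := fun j (γ : G) => ‖F (a j) γ‖ ^ 2) (fun j _ => hP (a j))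
  have h1 : (fun γ : G => ∑ j, ‖F (a j) γ‖ ^ 2) = fun γ => (rowTilde F a γ) ^ 2 := by
    funext γ; rw [aux_sq_rowTilde]
  have h2 : ∑ j, (τ (a j * star (a j))).re = (τ (∑ j, a j * star (a j))).re := by
    rw [map_sum, Complex.re_sum]
  rwa [h1, h2] at h

lemma aux_memlp {G : Type*} (f : G → ℝ) (hf : Summable fun γ => (f γ)^2) :
    Memℓp f 2 := by
  apply memℓp_gen
  have : ∀ γ, ‖f γ‖ ^ (2 : ℝ≥0∞).toReal = (f γ)^2 := by
    intro γ
    rw [show (2 : ℝ≥0∞).toReal = ((2:ℕ):ℝ) by norm_num, Real.rpow_natCast]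
    simp [sq_abs]
  exact (summable_congr this).mpr hf

lemma aux_norm_sq {G : Type*} (f : lp (fun _ : G => ℝ) 2) : ‖f‖^2 = ∑' γ, (f γ)^2 := by
  have h := lp.norm_rpow_eq_tsum (p := 2) (by norm_num) f
  rw [show (2 : ℝ≥0∞).toReal = ((2:ℕ):ℝ) by norm_num, Real.rpow_natCast] at h
  rw [h]
  congr 1; funext γ
  rw [show ((2:ℕ):ℝ) = (2:ℝ) by norm_num] at *
  rw [show ‖f γ‖ ^ (2:ℝ) = ‖f γ‖ ^ (2:ℕ) from Real.rpow_natCast _ 2 ▸ by norm_num]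
  simp [sq_abs]

/- Statement 6 (Lemma 2.4 of the paper): let `G` be a discrete group, `n ∈ ℕ`,
`b ∈ M_{1,n}(C*_red(G))` with operator norm at most 1 (i.e. `‖∑ bᵢ bᵢ*‖ ≤ 1`), and `g ∈ G`.
If there are `ε > 0` and a matrix `π(g) ∈ Mₙ(ℂ)` of norm at most 1 (i.e. `1 - π(g)* π(g)`
is positive semidefinite) with `‖u_g b − b π(g)‖₂ < ε`, then
`‖g·b̃ − b̃‖_{ℓ²} < ε + √(2ε)`. -/
theorem translate_rowTilde_close {G : Type*} [Group G] [Countable G] [DecidableEq G]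
    {A : Type*} [CStarAlgebra A] (U : G →* A) (hU : ∀ g, U g ∈ unitary A)
    (τ : A →ₗ[ℂ] ℂ) (hτ : IsState τ) (htr : IsTracial τ)
    (F : A →ₗ[ℂ] (G → ℂ))
    (hPlancherel : ∀ a : A, HasSum (fun γ => ‖F a γ‖ ^ 2) ((τ (a * star a)).re))
    (hFU : ∀ g γ : G, F (U g) γ = if γ = g then 1 else 0)
    (hshift : ∀ (g : G) (a : A) (γ : G), F (U g * a) γ = F a (g⁻¹ * γ))
    {n : ℕ} (b : Fin n → A) (hb : ‖∑ i, b i * star (b i)‖ ≤ 1)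
    (g : G) (ε : ℝ) (hε : 0 < ε) (π : Matrix (Fin n) (Fin n) ℂ)
    (hπ : (1 - star π * π).PosSemidef)
    (hcomm : rowNorm2 τ (fun j => U g * b j - ∑ i, π i j • b i) < ε) :
    Real.sqrt (∑' γ, (rowTilde F b (g⁻¹ * γ) - rowTilde F b γ) ^ 2) <
      ε + Real.sqrt (2 * ε) := by
  classical
  set c : Fin n → A := fun j => ∑ i, π i j • b i with hc
  set d : Fin n → A := fun j => U g * b j - c j with hd
  set a : Fin n → A := fun j => U g * b j with ha
  -- pointwise values of F
  have hFc : ∀ j γ, F (c j) γ = ∑ i, π i j * F (b i) γ := by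
    intro j γ
    simp only [hc, map_sum, map_smul]
    simp [Finset.sum_apply]
  have hFa : ∀ j γ, F (a j) γ = F (b j) (g⁻¹ * γ) := fun j γ => hshift g (b j) γ
  have hFd : ∀ j γ, F (d j) γ = F (a j) γ - F (c j) γ := by
    intro j γ
    simp only [hd, map_sub]
    simp [Pi.sub_apply]
    rfl
  -- Tilde functions
  set Tb : G → ℝ := rowTilde F b with hTb
  set Tc : G → ℝ := rowTilde F c with hTc
  set Td : G → ℝ := rowTilde F d with hTd
  set Ta : G → ℝ := fun γ => Tb (g⁻¹ * γ) with hTa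
  have hTa' : ∀ γ, rowTilde F a γ = Ta γ := by
    intro γ
    simp only [rowTilde, hTa, hTb]
    congr 1
    exact Finset.sum_congr rfl fun j _ => by rw [hFa]
  -- nonnegativity
  have hTb0 : ∀ γ, 0 ≤ Tb γ := fun γ => aux_rowTilde_nonneg F b γ
  have hTc0 : ∀ γ, 0 ≤ Tc γ := fun γ => aux_rowTilde_nonneg F c γ
  have hTd0 : ∀ γ, 0 ≤ Td γ := fun γ => aux_rowTilde_nonneg F d γ
  -- summabilities
  have hSb := aux_hasSum τ F hPlancherel b
  have hSc := aux_hasSum τ F hPlancherel c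
  have hSd := aux_hasSum τ F hPlancherel d
  have SB : Summable fun γ => (Tb γ)^2 := hSb.summable
  have SC : Summable fun γ => (Tc γ)^2 := hSc.summable
  have SD : Summable fun γ => (Td γ)^2 := hSd.summable
  have SA : Summable fun γ => (Ta γ)^2 := by
    have := (Equiv.mulLeft g⁻¹).summable_iff (f := fun γ => (Tb γ)^2) |>.mpr SB
    exact this
  -- pointwise inequalities
  have P1 : ∀ γ, |Ta γ - Tc γ| ≤ Td γ := by
    intro γ
    set Va : EuclideanSpace ℂ (Fin n) :=
      (WithLp.equiv 2 (Fin n → ℂ)).symm (fun i => F (a i) γ) with hVa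
    set Vc : EuclideanSpace ℂ (Fin n) :=
      (WithLp.equiv 2 (Fin n → ℂ)).symm (fun i => F (c i) γ) with hVc
    have na : Ta γ = ‖Va‖ := by
      rw [← hTa' γ, EuclideanSpace.norm_eq]; rfl
    have nc : Tc γ = ‖Vc‖ := by rw [EuclideanSpace.norm_eq]; rfl
    have nd : Td γ = ‖Va - Vc‖ := by
      rw [EuclideanSpace.norm_eq]
      simp only [hTd, rowTilde]
      congr 1
      refine Finset.sum_congr rfl fun j _ => ?_
      congr 1
      have : (Va - Vc) j = F (a j) γ - F (c j) γ := rfl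
      rw [this, ← hFd]
    rw [na, nc, nd]
    exact abs_norm_sub_norm_le Va Vc
  have P2 : ∀ γ, Tc γ ≤ Tb γ := by
    intro γ
    simp only [hTc, hTb, rowTilde]
    apply Real.sqrt_le_sqrt
    calc ∑ j, ‖F (c j) γ‖ ^ 2 = ∑ j, ‖∑ i, π i j * F (b i) γ‖ ^ 2 := by
          refine Finset.sum_congr rfl fun j _ => by rw [hFc]
      _ ≤ ∑ i, ‖F (b i) γ‖ ^ 2 := aux_matrix_bound π hπ _
  -- lp elements
  have SAC : Summable fun γ => (Ta γ - Tc γ)^2 := by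
    refine Summable.of_nonneg_of_le (fun γ => sq_nonneg _) (fun γ => ?_) SD
    rw [← sq_abs]
    exact pow_le_pow_left₀ (abs_nonneg _) (P1 γ) 2
  set E := lp (fun _ : G => ℝ) 2 with hE
  set B : E := ⟨Tb, aux_memlp Tb SB⟩ with hB
  set Ag : E := ⟨Ta, aux_memlp Ta SA⟩ with hAg
  set C : E := ⟨Tc, aux_memlp Tc SC⟩ with hC
  have coeB : ∀ γ, B γ = Tb γ := fun _ => rfl
  have coeA : ∀ γ, Ag γ = Ta γ := fun _ => rfl
  have coeC : ∀ γ, C γ = Tc γ := fun _ => rfl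
  have coe_sub : ∀ (x y : E) (γ : G), (x - y) γ = x γ - y γ := by
    intro x y γ; rw [lp.coeFn_sub]; rfl
  -- rowNorm2 d bound
  have hrd : rowNorm2 τ d ^ 2 = ∑' γ, (Td γ)^2 := by
    rw [rowNorm2, Real.sq_sqrt, hSd.tsum_eq]
    exact hSd.nonneg fun γ => sq_nonneg _
  have hrd0 : 0 ≤ rowNorm2 τ d := Real.sqrt_nonneg _
  -- ‖Ag - C‖ < ε
  have nAC : ‖Ag - C‖ < ε := by
    have h1 : ‖Ag - C‖^2 = ∑' γ, (Ta γ - Tc γ)^2 := by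
      rw [aux_norm_sq]
      exact tsum_congr fun γ => by rw [coe_sub, coeA, coeC]
    have h2 : ∑' γ, (Ta γ - Tc γ)^2 ≤ ∑' γ, (Td γ)^2 := by
      refine Summable.tsum_le_tsum (fun γ => ?_) SAC SD
      rw [← sq_abs]
      exact pow_le_pow_left₀ (abs_nonneg _) (P1 γ) 2
    have h3 : ‖Ag - C‖^2 < ε^2 := by
      rw [h1]
      calc ∑' γ, (Ta γ - Tc γ)^2 ≤ ∑' γ, (Td γ)^2 := h2
        _ = rowNorm2 τ d ^2 := hrd.symm
        _ < ε^2 := by nlinarith [hcomm, hrd0]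
    exact lt_of_pow_lt_pow_left₀ 2 hε.le h3
  -- ‖B‖ ≤ 1
  have nB : ‖B‖ ≤ 1 := by
    have h1 : ‖B‖^2 = ∑' γ, (Tb γ)^2 := by
      rw [aux_norm_sq]
    have h2 : ‖B‖^2 ≤ 1 := by
      rw [h1, hSb.tsum_eq]
      exact aux_tau_le_one τ hτ b hb
    exact (pow_le_one_iff_of_nonneg (norm_nonneg B) two_ne_zero).mp h2
  -- ‖Ag‖ = ‖B‖
  have nA : ‖Ag‖ = ‖B‖ := by
    have e1 : ‖Ag‖^2 = ∑' γ, (Ta γ)^2 := by rw [aux_norm_sq]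
    have e2 : ‖B‖^2 = ∑' γ, (Tb γ)^2 := by rw [aux_norm_sq]
    have h1 : ‖Ag‖^2 = ‖B‖^2 := by
      rw [e1, e2, hTa]
      simpa [Equiv.coe_mulLeft] using
        Equiv.tsum_eq (Equiv.mulLeft g⁻¹) (fun γ => (Tb γ)^2)
    have := congrArg Real.sqrt h1
    rwa [Real.sqrt_sq (norm_nonneg _), Real.sqrt_sq (norm_nonneg _)] at this
  -- ‖C‖ ≤ ‖B‖
  have nCB : ‖C‖ ≤ ‖B‖ := by
    have h1 : ‖C‖^2 ≤ ‖B‖^2 := by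
      rw [aux_norm_sq, aux_norm_sq]
      refine Summable.tsum_le_tsum (fun γ => ?_) SC SB
      exact pow_le_pow_left₀ (hTc0 γ) (P2 γ) 2
    calc ‖C‖ = Real.sqrt (‖C‖^2) := (Real.sqrt_sq (norm_nonneg _)).symm
      _ ≤ Real.sqrt (‖B‖^2) := Real.sqrt_le_sqrt h1
      _ = ‖B‖ := Real.sqrt_sq (norm_nonneg _)
  -- ‖B - C‖ < sqrt (2ε)
  have nBC : ‖B - C‖ < Real.sqrt (2 * ε) := by
    have SBC : Summable fun γ => (Tb γ - Tc γ)^2 := by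
      refine Summable.of_nonneg_of_le (fun γ => sq_nonneg _) (fun γ => ?_) (SB.sub SC)
      nlinarith [P2 γ, hTc0 γ]
    have h1 : ‖B - C‖^2 = ∑' γ, (Tb γ - Tc γ)^2 := by
      rw [aux_norm_sq]
      exact tsum_congr fun γ => by rw [coe_sub, coeB, coeC]
    have h2 : ∑' γ, (Tb γ - Tc γ)^2 ≤ ‖B‖^2 - ‖C‖^2 := by
      rw [aux_norm_sq, aux_norm_sq, ← Summable.tsum_sub SB SC]
      refine Summable.tsum_le_tsum (fun γ => ?_) SBC (SB.sub SC)
      nlinarith [P2 γ, hTc0 γ]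
    have h3 : ‖B‖^2 - ‖C‖^2 < 2 * ε := by
      have hBmC : ‖B‖ - ‖C‖ ≤ ‖Ag - C‖ := by
        calc ‖B‖ - ‖C‖ = ‖Ag‖ - ‖C‖ := by rw [nA]
          _ ≤ ‖Ag - C‖ := norm_sub_norm_le Ag C
      calc ‖B‖^2 - ‖C‖^2 = (‖B‖ + ‖C‖) * (‖B‖ - ‖C‖) := by ring
        _ ≤ 2 * (‖B‖ - ‖C‖) :=
            mul_le_mul_of_nonneg_right (by linarith [norm_nonneg C]) (by linarith)
        _ ≤ 2 * ‖Ag - C‖ := by linarith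
        _ < 2 * ε := by linarith
    have h4 : ‖B - C‖^2 < 2 * ε := by rw [h1]; linarith
    have := Real.lt_sqrt (norm_nonneg (B - C)) |>.mpr h4
    exact this
  -- conclusion
  have key : Real.sqrt (∑' γ, (Ta γ - Tb γ)^2) = ‖Ag - B‖ := by
    have h1 : ‖Ag - B‖^2 = ∑' γ, (Ta γ - Tb γ)^2 := by
      rw [aux_norm_sq]
      exact tsum_congr fun γ => by rw [coe_sub, coeA, coeB]
    rw [← h1, Real.sqrt_sq (norm_nonneg _)]
  calc Real.sqrt (∑' γ, (rowTilde F b (g⁻¹ * γ) - rowTilde F b γ) ^ 2)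
      = Real.sqrt (∑' γ, (Ta γ - Tb γ)^2) := rfl
    _ = ‖Ag - B‖ := key
    _ ≤ ‖Ag - C‖ + ‖C - B‖ := norm_sub_le_norm_sub_add_norm_sub Ag C B
    _ < ε + Real.sqrt (2 * ε) := by
        have : ‖C - B‖ = ‖B - C‖ := norm_sub_rev C B
        rw [this]
        exact add_lt_add nAC nBC
end

section
/- Let G be a countable discrete non-amenable group. For any ε > 0 there exist δ > 0 and a finite set K ⊆ G with the property: for any n ∈ ℕ and any b ∈ M_{1,n}(C*_red(G)) with operator norm ≤ 1, if for each g ∈ K there is a matrix π(g) ∈ Mₙ(ℂ) of norm at most 1 with ‖u_g b − b π(g)‖₂ < δ, then ‖b‖₂ < ε. -/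
open scoped ComplexOrder

noncomputable def l2norm {G : Type*} (ξ : G → ℂ) : ℝ :=
  Real.sqrt (∑' γ, ‖ξ γ‖ ^ 2)

/-- Amenability via almost invariant unit vectors in `ℓ²(G)`. -/
def IsAmenable (G : Type*) [Group G] : Prop :=
  ∀ (K : Finset G) (δ : ℝ), 0 < δ → ∃ ξ : G → ℂ,
    Summable (fun γ => ‖ξ γ‖ ^ 2) ∧ l2norm ξ = 1 ∧
    ∀ g ∈ K, l2norm (fun x => ξ (g⁻¹ * x) - ξ x) < δ

namespace RowAux

noncomputable def en {n : ℕ} (u : Fin n → ℂ) : ℝ := Real.sqrt (∑ i, ‖u i‖ ^ 2)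

lemma en_nonneg {n : ℕ} (u : Fin n → ℂ) : 0 ≤ en u := Real.sqrt_nonneg _

lemma en_sq {n : ℕ} (u : Fin n → ℂ) : en u ^ 2 = ∑ i, ‖u i‖ ^ 2 :=
  Real.sq_sqrt (Finset.sum_nonneg fun _ _ => sq_nonneg _)

lemma en_add_le {n : ℕ} (u v : Fin n → ℂ) : en (fun i => u i + v i) ≤ en u + en v := by
  have hcs := Real.sum_mul_le_sqrt_mul_sqrt Finset.univ (fun i => ‖u i‖) (fun i => ‖v i‖)
  have h1 : ∑ i, ‖u i + v i‖ ^ 2 ≤ (en u + en v) ^ 2 := by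
    have hpt : ∀ i ∈ Finset.univ, ‖u i + v i‖ ^ 2 ≤ ‖u i‖ ^ 2 + 2 * (‖u i‖ * ‖v i‖) + ‖v i‖ ^ 2 := by
      intro i _
      have h := norm_add_le (u i) (v i)
      nlinarith [norm_nonneg (u i), norm_nonneg (v i), norm_nonneg (u i + v i)]
    calc ∑ i, ‖u i + v i‖ ^ 2
        ≤ ∑ i, (‖u i‖ ^ 2 + 2 * (‖u i‖ * ‖v i‖) + ‖v i‖ ^ 2) := Finset.sum_le_sum hpt
      _ = ∑ i, ‖u i‖ ^ 2 + 2 * ∑ i, ‖u i‖ * ‖v i‖ + ∑ i, ‖v i‖ ^ 2 := by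
          rw [Finset.sum_add_distrib, Finset.sum_add_distrib, ← Finset.mul_sum]
      _ ≤ (en u + en v) ^ 2 := by
          have e1 := en_sq u
          have e2 := en_sq v
          have hcs' : ∑ i, ‖u i‖ * ‖v i‖ ≤ en u * en v := hcs
          nlinarith [en_nonneg u, en_nonneg v, hcs', e1, e2]
  calc en (fun i => u i + v i) ≤ Real.sqrt ((en u + en v) ^ 2) := Real.sqrt_le_sqrt h1
    _ = en u + en v := Real.sqrt_sq (add_nonneg (en_nonneg u) (en_nonneg v))

lemma abs_en_sub {n : ℕ} (u v : Fin n → ℂ) : |en u - en v| ≤ en (fun i => u i - v i) := by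
  have h1 : en u ≤ en (fun i => u i - v i) + en v := by
    have := en_add_le (fun i => u i - v i) v
    simpa using this
  have h2 : en v ≤ en (fun i => u i - v i) + en u := by
    have := en_add_le (fun i => v i - u i) u
    have hneg : en (fun i => v i - u i) = en (fun i => u i - v i) := by
      unfold en; congr 1; apply Finset.sum_congr rfl; intro i _
      rw [← norm_neg]; ring_nf
    simpa [hneg] using this
  rw [abs_sub_le_iff]; constructor <;> linarith

lemma re_star_dot {n : ℕ} (y : Fin n → ℂ) :
    (dotProduct (star y) y).re = ∑ i, ‖y i‖ ^ 2 := by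
  rw [dotProduct, Complex.re_sum]
  refine Finset.sum_congr rfl fun i _ => ?_
  rw [Pi.star_apply, Complex.star_def, ← Complex.normSq_eq_conj_mul_self, Complex.ofReal_re,
    Complex.sq_norm]

lemma psd_mulVec_le {n : ℕ} {π : Matrix (Fin n) (Fin n) ℂ}
    (hπ : (1 - star π * π).PosSemidef) (x : Fin n → ℂ) :
    ∑ i, ‖(π.mulVec x) i‖ ^ 2 ≤ ∑ i, ‖x i‖ ^ 2 := by
  have h := hπ.dotProduct_mulVec_nonneg x
  rw [Complex.nonneg_iff] at h
  have e : dotProduct (star x) ((1 - star π * π).mulVec x)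
      = dotProduct (star x) x
        - dotProduct (star (π.mulVec x)) (π.mulVec x) := by
    rw [Matrix.sub_mulVec, dotProduct_sub, Matrix.one_mulVec, ← Matrix.mulVec_mulVec,
      Matrix.dotProduct_mulVec, Matrix.star_mulVec, Matrix.star_eq_conjTranspose]
  have h1 := h.1
  rw [e, Complex.sub_re, re_star_dot, re_star_dot] at h1
  linarith

lemma contraction {n : ℕ} {π : Matrix (Fin n) (Fin n) ℂ}
    (hπ : (1 - star π * π).PosSemidef) (v : Fin n → ℂ) :
    ∑ i, ‖∑ j, π j i * v j‖ ^ 2 ≤ ∑ j, ‖v j‖ ^ 2 := by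
  have hstar : ∀ w y : Fin n → ℂ, y = (star π).mulVec w →
      ∑ i, ‖y i‖ ^ 2 ≤ ∑ i, ‖w i‖ ^ 2 := by
    intro w y hy
    have key2 : dotProduct (star (π.mulVec y)) w = dotProduct (star y) y := by
      rw [Matrix.star_mulVec, ← Matrix.dotProduct_mulVec, ← Matrix.star_eq_conjTranspose, ← hy]
    have hbound : (∑ i, ‖y i‖ ^ 2)
        ≤ Real.sqrt (∑ i, ‖(π.mulVec y) i‖ ^ 2) * Real.sqrt (∑ i, ‖w i‖ ^ 2) := by
      rw [← re_star_dot, ← key2]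
      calc (dotProduct (star (π.mulVec y)) w).re
          ≤ ‖dotProduct (star (π.mulVec y)) w‖ := Complex.re_le_norm _
        _ ≤ ∑ i, ‖(π.mulVec y) i‖ * ‖w i‖ := by
            rw [dotProduct]
            refine (norm_sum_le _ _).trans ?_
            refine Finset.sum_le_sum fun i _ => ?_
            rw [norm_mul, Pi.star_apply, norm_star]
        _ ≤ _ := Real.sum_mul_le_sqrt_mul_sqrt Finset.univ _ _
    have hmono : Real.sqrt (∑ i, ‖(π.mulVec y) i‖ ^ 2) ≤ Real.sqrt (∑ i, ‖y i‖ ^ 2) :=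
      Real.sqrt_le_sqrt (psd_mulVec_le hπ y)
    have hs2 : Real.sqrt (∑ i, ‖y i‖ ^ 2) ^ 2 = ∑ i, ‖y i‖ ^ 2 :=
      Real.sq_sqrt (Finset.sum_nonneg fun _ _ => sq_nonneg _)
    have ht2 : Real.sqrt (∑ i, ‖w i‖ ^ 2) ^ 2 = ∑ i, ‖w i‖ ^ 2 :=
      Real.sq_sqrt (Finset.sum_nonneg fun _ _ => sq_nonneg _)
    nlinarith [Real.sqrt_nonneg (∑ i, ‖y i‖ ^ 2), Real.sqrt_nonneg (∑ i, ‖w i‖ ^ 2),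
      sq_nonneg (Real.sqrt (∑ i, ‖y i‖ ^ 2) - Real.sqrt (∑ i, ‖w i‖ ^ 2)),
      mul_le_mul_of_nonneg_right hmono (Real.sqrt_nonneg (∑ i, ‖w i‖ ^ 2)), hbound, hs2, ht2]
  have hw := hstar (star v) ((star π).mulVec (star v)) rfl
  have hcomp : ∀ i, ‖((star π).mulVec (star v)) i‖ = ‖∑ j, π j i * v j‖ := by
    intro i
    have h : ((star π).mulVec (star v)) i = star (∑ j, π j i * v j) := by
      simp only [Matrix.mulVec, dotProduct, star_sum]
      refine Finset.sum_congr rfl fun j _ => ?_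
      simp [Matrix.star_apply, Pi.star_apply, star_mul', mul_comm]
    rw [h, norm_star]
  calc ∑ i, ‖∑ j, π j i * v j‖ ^ 2 = ∑ i, ‖((star π).mulVec (star v)) i‖ ^ 2 := by
        refine Finset.sum_congr rfl fun i _ => ?_; rw [hcomp]
    _ ≤ ∑ i, ‖(star v) i‖ ^ 2 := hw
    _ = ∑ j, ‖v j‖ ^ 2 := by refine Finset.sum_congr rfl fun j _ => ?_; simp



lemma summable_mul_sq {ι : Type*} {f g : ι → ℝ}
    (hf : Summable fun i => f i ^ 2) (hg : Summable fun i => g i ^ 2) :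
    Summable fun i => f i * g i := by
  have h : Summable fun i => |f i * g i| := by
    refine Summable.of_nonneg_of_le (fun i => abs_nonneg _) (fun i => ?_)
      ((hf.add hg).div_const 2)
    rw [abs_mul]
    nlinarith [sq_nonneg (|f i| - |g i|), sq_abs (f i), sq_abs (g i), abs_nonneg (f i),
      abs_nonneg (g i)]
  exact h.of_abs

lemma tsum_cs {ι : Type*} {f g : ι → ℝ} (hf0 : ∀ i, 0 ≤ f i) (hg0 : ∀ i, 0 ≤ g i)
    (hf : Summable fun i => f i ^ 2) (hg : Summable fun i => g i ^ 2) :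
    ∑' i, f i * g i ≤ Real.sqrt (∑' i, f i ^ 2) * Real.sqrt (∑' i, g i ^ 2) := by
  refine (summable_mul_sq hf hg).tsum_le_of_sum_le fun s => ?_
  calc ∑ i ∈ s, f i * g i
      ≤ Real.sqrt (∑ i ∈ s, f i ^ 2) * Real.sqrt (∑ i ∈ s, g i ^ 2) :=
        Real.sum_mul_le_sqrt_mul_sqrt s f g
    _ ≤ _ := by
        have h1 : ∑ i ∈ s, f i ^ 2 ≤ ∑' i, f i ^ 2 :=
          hf.sum_le_tsum s (fun i _ => sq_nonneg _)
        have h2 : ∑ i ∈ s, g i ^ 2 ≤ ∑' i, g i ^ 2 :=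
          hg.sum_le_tsum s (fun i _ => sq_nonneg _)
        exact mul_le_mul (Real.sqrt_le_sqrt h1) (Real.sqrt_le_sqrt h2)
          (Real.sqrt_nonneg _) (Real.sqrt_nonneg _)

lemma summable_add_sq {ι : Type*} {f g : ι → ℝ}
    (hf : Summable fun i => f i ^ 2) (hg : Summable fun i => g i ^ 2) :
    Summable fun i => (f i + g i) ^ 2 := by
  have h : ∀ i, (f i + g i) ^ 2 = f i ^ 2 + 2 * (f i * g i) + g i ^ 2 := fun i => by ring
  simp_rw [h]
  exact (hf.add ((summable_mul_sq hf hg).mul_left 2)).add hg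

lemma tsum_minkowski {ι : Type*} {f g : ι → ℝ} (hf0 : ∀ i, 0 ≤ f i) (hg0 : ∀ i, 0 ≤ g i)
    (hf : Summable fun i => f i ^ 2) (hg : Summable fun i => g i ^ 2) :
    Real.sqrt (∑' i, (f i + g i) ^ 2)
      ≤ Real.sqrt (∑' i, f i ^ 2) + Real.sqrt (∑' i, g i ^ 2) := by
  have h : ∀ i, (f i + g i) ^ 2 = f i ^ 2 + 2 * (f i * g i) + g i ^ 2 := fun i => by ring
  have hfg := summable_mul_sq hf hg
  have key : ∑' i, (f i + g i) ^ 2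
      ≤ (Real.sqrt (∑' i, f i ^ 2) + Real.sqrt (∑' i, g i ^ 2)) ^ 2 := by
    have expand : ∑' i, (f i + g i) ^ 2
        = (∑' i, f i ^ 2) + 2 * (∑' i, f i * g i) + ∑' i, g i ^ 2 := by
      simp_rw [h]
      rw [Summable.tsum_add (hf.add (hfg.mul_left 2)) hg, Summable.tsum_add hf (hfg.mul_left 2),
        tsum_mul_left]
    rw [expand]
    have hcs := tsum_cs hf0 hg0 hf hg
    have e1 : Real.sqrt (∑' i, f i ^ 2) ^ 2 = ∑' i, f i ^ 2 :=
      Real.sq_sqrt (tsum_nonneg fun i => sq_nonneg _)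
    have e2 : Real.sqrt (∑' i, g i ^ 2) ^ 2 = ∑' i, g i ^ 2 :=
      Real.sq_sqrt (tsum_nonneg fun i => sq_nonneg _)
    nlinarith [Real.sqrt_nonneg (∑' i, f i ^ 2), Real.sqrt_nonneg (∑' i, g i ^ 2)]
  calc Real.sqrt (∑' i, (f i + g i) ^ 2)
      ≤ Real.sqrt ((Real.sqrt (∑' i, f i ^ 2) + Real.sqrt (∑' i, g i ^ 2)) ^ 2) :=
        Real.sqrt_le_sqrt key
    _ = _ := Real.sqrt_sq (add_nonneg (Real.sqrt_nonneg _) (Real.sqrt_nonneg _))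

end RowAux

set_option maxHeartbeats 2000000 in
open RowAux in
/- Statement 8 (Corollary 2.6 of the paper): Let `G` be a countable discrete non-amenable
group, with reduced group C*-algebra modeled by `A`, `U`, `τ`, and Fourier coefficient map
`F`.  For any `ε > 0` there are `δ > 0` and a finite `K ⊆ G` such that: for any `n` and any
row `b ∈ M_{1,n}(C*_red(G))` of operator norm `≤ 1`, if for each `g ∈ K` there is
`π(g) ∈ Mₙ(ℂ)` of norm at most 1 with `‖u_g b − b π(g)‖₂ < δ`, then `‖b‖₂ < ε`. -/
theorem rowNorm2_small_of_almost_intertwining {G : Type*} [Group G] [Countable G]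
    [DecidableEq G] (hG : ¬ IsAmenable G)
    {A : Type*} [CStarAlgebra A] (U : G →* A) (hU : ∀ g, U g ∈ unitary A)
    (τ : A →ₗ[ℂ] ℂ) (hτ : IsState τ) (htr : IsTracial τ)
    (F : A →ₗ[ℂ] (G → ℂ))
    (hPlancherel : ∀ a : A, HasSum (fun γ => ‖F a γ‖ ^ 2) ((τ (a * star a)).re))
    (hFU : ∀ g γ : G, F (U g) γ = if γ = g then 1 else 0)
    (hshift : ∀ (g : G) (a : A) (γ : G), F (U g * a) γ = F a (g⁻¹ * γ)) :
    ∀ ε : ℝ, 0 < ε → ∃ δ : ℝ, 0 < δ ∧ ∃ K : Finset G,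
      ∀ (n : ℕ) (b : Fin n → A), ‖∑ i, b i * star (b i)‖ ≤ 1 →
        (∀ g ∈ K, ∃ π : Matrix (Fin n) (Fin n) ℂ, (1 - star π * π).PosSemidef ∧
          rowNorm2 τ (fun j => U g * b j - ∑ i, π i j • b i) < δ) →
        rowNorm2 τ b < ε := by
  rw [IsAmenable] at hG
  push_neg at hG
  obtain ⟨K, δ0, hδ0, hK⟩ := hG
  intro ε hε
  set t := min (δ0 / 4) (δ0 ^ 2 / 8) with ht
  have ht0 : 0 < t := lt_min (by positivity) (by positivity)
  have ht4 : t ≤ δ0 / 4 := min_le_left _ _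
  have ht8 : t ≤ δ0 ^ 2 / 8 := min_le_right _ _
  refine ⟨ε * t, by positivity, K, ?_⟩
  intro n b _ hb
  by_contra hcon
  push_neg at hcon
  -- row Plancherel
  have hrow : ∀ (x : Fin n → A),
      HasSum (fun γ => ∑ i, ‖F (x i) γ‖ ^ 2) ((τ (∑ i, x i * star (x i))).re) := by
    intro x
    have h : (τ (∑ i, x i * star (x i))).re = ∑ i, (τ (x i * star (x i))).re := by
      rw [map_sum, Complex.re_sum]
    rw [h]
    exact hasSum_sum fun i _ => hPlancherel (x i)
  set N2 := (τ (∑ i, b i * star (b i))).re with hN2def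
  have hNsum := hrow b
  have hN2nonneg : 0 ≤ N2 :=
    hNsum.nonneg fun γ => Finset.sum_nonneg fun i _ => sq_nonneg _
  set N := Real.sqrt N2 with hNdef
  have hεN : ε ≤ N := hcon
  have hN0 : 0 < N := lt_of_lt_of_le hε hεN
  have hN2sq : N ^ 2 = N2 := Real.sq_sqrt hN2nonneg
  -- btil
  set btil : G → ℝ := fun γ => en (fun i => F (b i) γ) with hbtildef
  have hbtil_sq : ∀ γ, btil γ ^ 2 = ∑ i, ‖F (b i) γ‖ ^ 2 := fun γ => en_sq _
  have hbtil0 : ∀ γ, 0 ≤ btil γ := fun γ => en_nonneg _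
  have hbtilsum : HasSum (fun γ => btil γ ^ 2) N2 := by
    have : (fun γ => btil γ ^ 2) = fun γ => ∑ i, ‖F (b i) γ‖ ^ 2 := funext hbtil_sq
    rw [this]; exact hNsum
  -- the almost invariant vector
  set ξ : G → ℂ := fun γ => ((btil γ / N : ℝ) : ℂ) with hξdef
  have hξnorm : ∀ γ, ‖ξ γ‖ ^ 2 = btil γ ^ 2 / N ^ 2 := by
    intro γ
    simp only [hξdef, Complex.norm_real, Real.norm_eq_abs, sq_abs, div_pow]
  have hξsummable : Summable fun γ => ‖ξ γ‖ ^ 2 := by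
    have : (fun γ => ‖ξ γ‖ ^ 2) = fun γ => btil γ ^ 2 / N ^ 2 := funext hξnorm
    rw [this]
    exact hbtilsum.summable.div_const _
  have hξl2 : l2norm ξ = 1 := by
    rw [l2norm]
    have h : ∑' γ, ‖ξ γ‖ ^ 2 = N2 / N ^ 2 := by
      have : (fun γ => ‖ξ γ‖ ^ 2) = fun γ => btil γ ^ 2 / N ^ 2 := funext hξnorm
      rw [this, tsum_div_const, hbtilsum.tsum_eq]
    rw [h, hN2sq, div_self (ne_of_gt (lt_of_lt_of_le (by positivity) (le_of_eq hN2sq))),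
      Real.sqrt_one]
  obtain ⟨g, hgK, hglb⟩ := hK ξ hξsummable hξl2
  obtain ⟨π, hπpos, hπerr⟩ := hb g hgK
  -- error row
  set e : Fin n → A := fun j => U g * b j - ∑ i, π i j • b i with hedef
  set E2 := (τ (∑ j, e j * star (e j))).re with hE2def
  have hEsum := hrow e
  have hE2nonneg : 0 ≤ E2 :=
    hEsum.nonneg fun γ => Finset.sum_nonneg fun i _ => sq_nonneg _
  set Er := Real.sqrt E2 with hErdef
  have hErnonneg : 0 ≤ Er := Real.sqrt_nonneg _
  have hErsq : Er ^ 2 = E2 := Real.sq_sqrt hE2nonneg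
  have hErδ : Er < ε * t := hπerr
  set errf : G → ℝ := fun γ => en (fun j => F (e j) γ) with herrfdef
  have herrf0 : ∀ γ, 0 ≤ errf γ := fun γ => en_nonneg _
  have herrfsum : HasSum (fun γ => errf γ ^ 2) E2 := by
    have : (fun γ => errf γ ^ 2) = fun γ => ∑ j, ‖F (e j) γ‖ ^ 2 := funext fun γ => en_sq _
    rw [this]; exact hEsum
  -- compressed row
  set cr : Fin n → A := fun j => ∑ i, π i j • b i with hcrdef
  set M2 := (τ (∑ j, cr j * star (cr j))).re with hM2def
  have hMsum := hrow cr
  set ctil : G → ℝ := fun γ => en (fun j => F (cr j) γ) with hctildef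
  have hctil0 : ∀ γ, 0 ≤ ctil γ := fun γ => en_nonneg _
  have hctilsum : HasSum (fun γ => ctil γ ^ 2) M2 := by
    have : (fun γ => ctil γ ^ 2) = fun γ => ∑ j, ‖F (cr j) γ‖ ^ 2 := funext fun γ => en_sq _
    rw [this]; exact hMsum
  have hM2nonneg : 0 ≤ M2 :=
    hMsum.nonneg fun γ => Finset.sum_nonneg fun i _ => sq_nonneg _
  set Mr := Real.sqrt M2 with hMrdef
  have hMr0 : 0 ≤ Mr := Real.sqrt_nonneg _
  have hMrsq : Mr ^ 2 = M2 := Real.sq_sqrt hM2nonneg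
  have hFcr : ∀ j γ, F (cr j) γ = ∑ i, π i j * F (b i) γ := by
    intro j γ
    simp only [hcrdef, map_sum, map_smul, Finset.sum_apply, Pi.smul_apply, smul_eq_mul]
  have hctil_le : ∀ γ, ctil γ ≤ btil γ := by
    intro γ
    have h := contraction hπpos (fun i => F (b i) γ)
    simp only [hctildef, hbtildef]
    unfold RowAux.en
    apply Real.sqrt_le_sqrt
    calc ∑ j, ‖F (cr j) γ‖ ^ 2 = ∑ j, ‖∑ i, π i j * F (b i) γ‖ ^ 2 := by
          refine Finset.sum_congr rfl fun j _ => ?_; rw [hFcr]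
      _ ≤ _ := h
  have hM2N2 : M2 ≤ N2 :=
    hasSum_le (fun γ => by
      have := hctil_le γ; have := hctil0 γ; nlinarith) hctilsum hbtilsum
  have hMrN : Mr ≤ N := Real.sqrt_le_sqrt hM2N2
  -- shift identity
  have hshift' : ∀ γ, btil (g⁻¹ * γ) = en (fun j => F (U g * b j) γ) := by
    intro γ
    simp only [hbtildef]
    congr 1
    funext j
    rw [hshift]
  have hdiff : ∀ γ, (fun j => F (U g * b j) γ - F (cr j) γ) = fun j => F (e j) γ := by
    intro γ
    funext j
    simp only [hedef, map_sub]
    rfl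
  -- pointwise almost-invariance
  have hupt : ∀ γ, en (fun j => F (U g * b j) γ) ≤ ctil γ + errf γ := by
    intro γ
    have h1 : (fun j => F (U g * b j) γ)
        = fun j => F (cr j) γ + (F (U g * b j) γ - F (cr j) γ) := by
      funext j; ring
    rw [h1]
    have h2 := en_add_le (fun j => F (cr j) γ) (fun j => F (U g * b j) γ - F (cr j) γ)
    calc _ ≤ en (fun j => F (cr j) γ) + en (fun j => F (U g * b j) γ - F (cr j) γ) := h2
      _ = ctil γ + errf γ := by rw [hdiff γ]
  have hpt : ∀ γ, |btil (g⁻¹ * γ) - btil γ| ≤ errf γ + (btil γ - ctil γ) := by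
    intro γ
    rw [hshift' γ]
    have h1 : |en (fun j => F (U g * b j) γ) - ctil γ| ≤ errf γ := by
      have := abs_en_sub (fun j => F (U g * b j) γ) (fun j => F (cr j) γ)
      rw [hdiff γ] at this
      exact this
    have h2 := hctil_le γ
    have h3 := abs_sub_le (en (fun j => F (U g * b j) γ)) (ctil γ) (btil γ)
    have h4 : |ctil γ - btil γ| = btil γ - ctil γ := by
      rw [abs_sub_comm, abs_of_nonneg (by linarith)]
    calc |en (fun j => F (U g * b j) γ) - btil γ| ≤ _ + _ := h3
      _ ≤ errf γ + (btil γ - ctil γ) := by rw [h4]; exact add_le_add_left h1 _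
  -- reindexed Plancherel
  have hNshift : HasSum (fun γ => btil (g⁻¹ * γ) ^ 2) N2 := by
    have h := (Equiv.mulLeft g⁻¹).hasSum_iff.mpr hbtilsum
    exact h
  -- N ≤ Mr + Er
  have hsumce : Summable fun γ => (ctil γ + errf γ) ^ 2 :=
    summable_add_sq hctilsum.summable herrfsum.summable
  have hNle : N ≤ Mr + Er := by
    have h1 : N2 ≤ ∑' γ, (ctil γ + errf γ) ^ 2 := by
      refine hasSum_le (fun γ => ?_) hNshift hsumce.hasSum
      have ha := hupt γ
      have hb1 := hbtil0 (g⁻¹ * γ)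
      have hc := hctil0 γ
      have hd := herrf0 γ
      rw [hshift' γ] at hb1 ⊢
      nlinarith
    calc N ≤ Real.sqrt (∑' γ, (ctil γ + errf γ) ^ 2) := Real.sqrt_le_sqrt h1
      _ ≤ Real.sqrt (∑' γ, ctil γ ^ 2) + Real.sqrt (∑' γ, errf γ ^ 2) :=
          tsum_minkowski hctil0 herrf0 hctilsum.summable herrfsum.summable
      _ = Mr + Er := by rw [hctilsum.tsum_eq, herrfsum.tsum_eq]
  -- tail bound
  have hdiffsum : Summable fun γ => (btil γ - ctil γ) ^ 2 := by
    refine Summable.of_nonneg_of_le (fun γ => sq_nonneg _) (fun γ => ?_) hbtilsum.summable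
    have := hctil_le γ; have := hctil0 γ; nlinarith
  have h3 : ∑' γ, (btil γ - ctil γ) ^ 2 ≤ N2 - M2 := by
    have hle : ∀ γ, (btil γ - ctil γ) ^ 2 ≤ btil γ ^ 2 - ctil γ ^ 2 := by
      intro γ; have := hctil_le γ; have := hctil0 γ; nlinarith
    calc ∑' γ, (btil γ - ctil γ) ^ 2
        ≤ ∑' γ, (btil γ ^ 2 - ctil γ ^ 2) :=
          Summable.tsum_le_tsum hle hdiffsum (hbtilsum.summable.sub hctilsum.summable)
      _ = N2 - M2 := by
          rw [Summable.tsum_sub hbtilsum.summable hctilsum.summable, hbtilsum.tsum_eq,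
            hctilsum.tsum_eq]
  -- main Δ estimate
  have hΔ : Real.sqrt (∑' γ, (btil (g⁻¹ * γ) - btil γ) ^ 2)
      ≤ Er + Real.sqrt (N2 - M2) := by
    have hdom : ∀ γ, (btil (g⁻¹ * γ) - btil γ) ^ 2
        ≤ (errf γ + (btil γ - ctil γ)) ^ 2 := by
      intro γ
      have h := hpt γ
      have h0 : 0 ≤ errf γ + (btil γ - ctil γ) := by
        have := herrf0 γ; have := hctil_le γ; linarith
      nlinarith [abs_nonneg (btil (g⁻¹ * γ) - btil γ), sq_abs (btil (g⁻¹ * γ) - btil γ)]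
    have hsum2 : Summable fun γ => (errf γ + (btil γ - ctil γ)) ^ 2 :=
      summable_add_sq herrfsum.summable hdiffsum
    have hΔsum : Summable fun γ => (btil (g⁻¹ * γ) - btil γ) ^ 2 :=
      Summable.of_nonneg_of_le (fun γ => sq_nonneg _) hdom hsum2
    calc Real.sqrt (∑' γ, (btil (g⁻¹ * γ) - btil γ) ^ 2)
        ≤ Real.sqrt (∑' γ, (errf γ + (btil γ - ctil γ)) ^ 2) :=
          Real.sqrt_le_sqrt (Summable.tsum_le_tsum hdom hΔsum hsum2)
      _ ≤ Real.sqrt (∑' γ, errf γ ^ 2) + Real.sqrt (∑' γ, (btil γ - ctil γ) ^ 2) :=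
          tsum_minkowski herrf0
            (fun γ => sub_nonneg.2 (hctil_le γ)) herrfsum.summable hdiffsum
      _ ≤ Er + Real.sqrt (N2 - M2) := by
          rw [herrfsum.tsum_eq]
          exact add_le_add_right (Real.sqrt_le_sqrt h3) _
  -- l2 norm of the difference
  have hl2 : l2norm (fun x => ξ (g⁻¹ * x) - ξ x)
      = Real.sqrt (∑' γ, (btil (g⁻¹ * γ) - btil γ) ^ 2) / N := by
    rw [l2norm]
    have h : ∀ x, ‖ξ (g⁻¹ * x) - ξ x‖ ^ 2 = (btil (g⁻¹ * x) - btil x) ^ 2 / N ^ 2 := by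
      intro x
      simp only [hξdef]
      rw [← Complex.ofReal_sub, Complex.norm_real, Real.norm_eq_abs, sq_abs,
        div_sub_div_same, div_pow]
    have h2 : (fun x => ‖ξ (g⁻¹ * x) - ξ x‖ ^ 2)
        = fun x => (btil (g⁻¹ * x) - btil x) ^ 2 / N ^ 2 := funext h
    rw [h2, tsum_div_const, Real.sqrt_div (tsum_nonneg fun γ => sq_nonneg _),
      Real.sqrt_sq hN0.le]
  -- final numeric estimate
  have hErN : Er ≤ N * t := le_trans hErδ.le (by nlinarith)
  have h4 : N2 - M2 ≤ 2 * t * N ^ 2 := by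
    have e1 : N - Mr ≤ Er := by linarith
    have e2 : N + Mr ≤ 2 * N := by linarith
    have e3 : N2 - M2 = (N - Mr) * (N + Mr) := by rw [← hN2sq, ← hMrsq]; ring
    have e4 : (N - Mr) * (N + Mr) ≤ Er * (2 * N) :=
      mul_le_mul e1 e2 (by linarith) hErnonneg
    have e5 : Er * (2 * N) ≤ (N * t) * (2 * N) :=
      mul_le_mul_of_nonneg_right hErN (by linarith)
    nlinarith
  have hsq2 : Real.sqrt (N2 - M2) ≤ Real.sqrt (2 * t) * N := by
    have h5 : N2 - M2 ≤ (Real.sqrt (2 * t) * N) ^ 2 := by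
      rw [mul_pow, Real.sq_sqrt (by positivity)]
      nlinarith
    calc Real.sqrt (N2 - M2) ≤ Real.sqrt ((Real.sqrt (2 * t) * N) ^ 2) :=
          Real.sqrt_le_sqrt h5
      _ = Real.sqrt (2 * t) * N := Real.sqrt_sq (by positivity)
  have hsqt : Real.sqrt (2 * t) ≤ δ0 / 2 := by
    have h6 : 2 * t ≤ (δ0 / 2) ^ 2 := by nlinarith
    calc Real.sqrt (2 * t) ≤ Real.sqrt ((δ0 / 2) ^ 2) := Real.sqrt_le_sqrt h6
      _ = δ0 / 2 := Real.sqrt_sq (by positivity)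
  have hfinal : l2norm (fun x => ξ (g⁻¹ * x) - ξ x) < δ0 := by
    rw [hl2]
    have hb1 : Real.sqrt (∑' γ, (btil (g⁻¹ * γ) - btil γ) ^ 2)
        ≤ Er + Real.sqrt (2 * t) * N := le_trans hΔ (by linarith)
    have hErNlt : Er / N < t := by
      rw [div_lt_iff₀ hN0]
      calc Er < ε * t := hErδ
        _ ≤ t * N := by nlinarith
    calc Real.sqrt (∑' γ, (btil (g⁻¹ * γ) - btil γ) ^ 2) / N
        ≤ (Er + Real.sqrt (2 * t) * N) / N := by
          exact div_le_div_of_nonneg_right hb1 hN0.le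
      _ = Er / N + Real.sqrt (2 * t) := by field_simp
      _ < t + δ0 / 2 := by linarith
      _ ≤ δ0 / 4 + δ0 / 2 := by linarith
      _ < δ0 := by linarith
  linarith [hglb, hfinal]
end

section
/- Let G be a countable discrete group which is not inner amenable. For any ε > 0 there exist δ > 0 and a finite set K ⊆ G such that any ξ ∈ C*_red(G) with ‖u_g ξ u_g⁻¹ − ξ‖₂ < δ for all g ∈ K must satisfy ‖ξ − τ(ξ)·1‖₂ < ε, where τ is the canonical trace and ‖a‖₂ = τ(aa*)^{1/2}. -/
/-- Inner amenability of a countable discrete group, via Effros's characterization: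
existence of unit vectors `η ∈ ℓ²(G)` with `η(e) = 0` which are asymptotically invariant
under conjugation `(g η g⁻¹)(x) = η(g⁻¹ x g)`. -/
def IsInnerAmenable (G : Type*) [Group G] : Prop :=
  ∀ (K : Finset G) (δ : ℝ), 0 < δ → ∃ η : G → ℂ,
    Summable (fun γ => ‖η γ‖ ^ 2) ∧ l2norm η = 1 ∧ η 1 = 0 ∧
    ∀ g ∈ K, l2norm (fun x => η (g⁻¹ * x * g) - η x) < δ

/-- The 2-seminorm `‖a‖₂ = τ(a a*)^{1/2}` on `A`. -/
noncomputable def norm2 {A : Type*} [CStarAlgebra A] (τ : A →ₗ[ℂ] ℂ) (a : A) : ℝ :=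
  Real.sqrt ((τ (a * star a)).re)

/- Statement 9 (Lemma 2.8 of the paper): Let `G` be a countable discrete group which is not
inner amenable, with reduced group C*-algebra modeled by `A`, `U`, `τ`, and Fourier
coefficient map `F`.  For any `ε > 0` there are `δ > 0` and a finite `K ⊆ G` such that any
`ξ ∈ C*_red(G)` with `‖u_g ξ u_g⁻¹ − ξ‖₂ < δ` for all `g ∈ K` satisfies
`‖ξ − τ(ξ)·1‖₂ < ε`. -/
lemma l2norm_const_mul {G : Type*} (c : ℝ) (hc : 0 ≤ c) (f : G → ℂ) :
    l2norm (fun γ => (c : ℂ) * f γ) = c * l2norm f := by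
  unfold l2norm
  have h : ∀ γ : G, ‖(c : ℂ) * f γ‖ ^ 2 = c ^ 2 * ‖f γ‖ ^ 2 := by
    intro γ
    rw [norm_mul, Complex.norm_real, Real.norm_eq_abs, abs_of_nonneg hc, mul_pow]
  simp_rw [h, tsum_mul_left]
  rw [Real.sqrt_mul (by positivity), Real.sqrt_sq hc]

theorem close_to_scalar_of_almost_conj_invariant {G : Type*} [Group G] [Countable G]
    [DecidableEq G] (hG : ¬ IsInnerAmenable G)
    {A : Type*} [CStarAlgebra A] (U : G →* A) (hU : ∀ g, U g ∈ unitary A)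
    (τ : A →ₗ[ℂ] ℂ) (hτ : IsState τ) (htr : IsTracial τ)
    (F : A →ₗ[ℂ] (G → ℂ))
    (hPlancherel : ∀ a : A, HasSum (fun γ => ‖F a γ‖ ^ 2) ((τ (a * star a)).re))
    (hFU : ∀ g γ : G, F (U g) γ = if γ = g then 1 else 0)
    (hFone : ∀ a : A, F a 1 = τ a)
    (hconj : ∀ (g : G) (a : A) (x : G), F (U g * a * star (U g)) x = F a (g⁻¹ * x * g)) :
    ∀ ε : ℝ, 0 < ε → ∃ δ : ℝ, 0 < δ ∧ ∃ K : Finset G,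
      ∀ ξ : A, (∀ g ∈ K, norm2 τ (U g * ξ * star (U g) - ξ) < δ) →
        norm2 τ (ξ - τ ξ • 1) < ε := by
  rw [IsInnerAmenable] at hG
  push_neg at hG
  obtain ⟨K, δ, hδ, hK⟩ := hG
  intro ε hε
  refine ⟨ε * δ, by positivity, K, ?_⟩
  intro ξ hξ
  by_contra hcon
  push_neg at hcon
  set a := ξ - τ ξ • 1 with ha
  have hna : ε ≤ norm2 τ a := hcon
  have hapos : 0 < norm2 τ a := lt_of_lt_of_le hε hna
  set c : ℝ := (norm2 τ a)⁻¹ with hc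
  have hcpos : 0 < c := inv_pos.mpr hapos
  have hl2F : ∀ b : A, l2norm (F b) = norm2 τ b := by
    intro b
    unfold l2norm norm2
    rw [(hPlancherel b).tsum_eq]
  have hconj_a : ∀ g : G, U g * a * star (U g) - a = U g * ξ * star (U g) - ξ := by
    intro g
    have h1 : U g * star (U g) = 1 := (Unitary.mem_iff.mp (hU g)).2
    rw [ha]
    rw [mul_sub, sub_mul, mul_smul_comm, smul_mul_assoc, mul_one, h1]
    abel
  set η : G → ℂ := fun γ => (c : ℂ) * F a γ with hη
  have hηsq : ∀ γ, ‖η γ‖ ^ 2 = c ^ 2 * ‖F a γ‖ ^ 2 := by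
    intro γ
    rw [hη, norm_mul, Complex.norm_real, Real.norm_eq_abs, abs_of_nonneg hcpos.le, mul_pow]
  have hsum : Summable (fun γ => ‖η γ‖ ^ 2) := by
    refine (((hPlancherel a).summable).mul_left (c ^ 2)).congr fun γ => ?_
    rw [hηsq]
  have hnorm : l2norm η = 1 := by
    rw [hη, l2norm_const_mul c hcpos.le, hl2F, hc, inv_mul_cancel₀ hapos.ne']
  have hτa : τ a = 0 := by
    rw [ha, map_sub, map_smul, hτ.1, smul_eq_mul, mul_one, sub_self]
  have hη1 : η 1 = 0 := by
    rw [hη]; simp [hFone, hτa]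
  obtain ⟨g, hgK, hge⟩ := hK η hsum hnorm hη1
  have hb : (fun x => η (g⁻¹ * x * g) - η x)
      = fun x => (c : ℂ) * F (U g * ξ * star (U g) - ξ) x := by
    funext x
    have h2 : F (U g * ξ * star (U g) - ξ) x = F a (g⁻¹ * x * g) - F a x := by
      rw [← hconj_a g, map_sub]
      simp only [Pi.sub_apply, hconj]
    rw [h2, hη]
    ring
  rw [hb, l2norm_const_mul c hcpos.le, hl2F] at hge
  have hlt : norm2 τ (U g * ξ * star (U g) - ξ) < ε * δ := hξ g hgK
  have hcle : c ≤ ε⁻¹ := by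
    rw [hc]
    exact inv_anti₀ hε hna
  have h0 : (0:ℝ) ≤ norm2 τ (U g * ξ * star (U g) - ξ) := Real.sqrt_nonneg _
  have : c * norm2 τ (U g * ξ * star (U g) - ξ) < δ := by
    calc c * norm2 τ (U g * ξ * star (U g) - ξ)
        ≤ ε⁻¹ * norm2 τ (U g * ξ * star (U g) - ξ) := by
          exact mul_le_mul_of_nonneg_right hcle h0
      _ < ε⁻¹ * (ε * δ) := by
          exact mul_lt_mul_of_pos_left hlt (by positivity)
      _ = δ := by field_simp
  exact absurd this (not_lt.mpr hge)
end
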